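/- Suppose π_i^{[β]} satisfies the dynamic-network reproductive-value recurrence π_i^{[β]} = Σ_j e_{ij}(x,β) Σ_γ q_{βγ} π_j^{[γ]} + (1 − Σ_j e_{ji}(x,β)) Σ_γ q_{βγ} π_i^{[γ]} for all i, β and a fixed configuration x (neutral drift: e independent of x). Then the expected change in π-weighted abundance Δ̂(x,β) := Σ_{i,j} e_{ji}(x,β) (Σ_γ q_{βγ} π_i^{[γ]}) (x_j − x_i) + Σ_i x_i (Σ_γ q_{βγ} π_i^{[γ]} − π_i^{[β]}) equals 0 for every configuration x ∈ {0,1}^N and every β. -/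

import Mathlib

/-!
Write `f i = ∑ γ, q_{βγ} π_i^{[γ]}`. The recurrence says that `f i - π_i^{[β]}` is the
reproductive value flowing out of site `i` minus the value flowing in. Swapping the two
indices of the double sum turns the replacement term into `∑ i, x i * (inflow - outflow)`,
so the two parts of `Δ̂` cancel for every configuration `x`.
-/

open Finset

theorem sum_sum_mul_sub_eq_sum_mul_inflow_sub_outflow {ι R : Type*} [Fintype ι] [CommRing R]
    (e : ι → ι → R) (f x : ι → R) :
    ∑ i, ∑ j, e j i * f i * (x j - x i)
      = ∑ i, x i * (∑ j, e i j * f j - (∑ j, e j i) * f i) := by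
  have swap : ∑ i, ∑ j, e j i * f i * x j = ∑ i, ∑ j, x i * (e i j * f j) := by
    rw [sum_comm]
    exact sum_congr rfl fun _ _ => sum_congr rfl fun _ _ => by ring
  simp only [mul_sub, sum_sub_distrib, swap, sum_mul, mul_sum]
  congr 1
  exact sum_congr rfl fun _ _ => sum_congr rfl fun _ _ => by ring

/-- Under neutral drift (replacement probabilities `e` independent of the
configuration), if `π` satisfies the dynamic-network reproductive-value
recurrence, then the expected change `Δ̂(x,β)` in the `π`-weighted abundance of
the mutant trait is zero in every state `(x, β)`: the weighted abundance is a
martingale. -/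
theorem pi_weighted_abundance_martingale
    {N L : ℕ} (Q : Matrix (Fin L) (Fin L) ℝ)
    (e : Fin N → Fin N → ℝ)
    (π : Fin N → Fin L → ℝ)
    (hrec : ∀ i β, π i β =
      (∑ j, e i j * ∑ γ, Q β γ * π j γ)
        + (1 - ∑ j, e j i) * ∑ γ, Q β γ * π i γ) :
    ∀ (x : Fin N → ℝ), (∀ i, x i = 0 ∨ x i = 1) → ∀ β,
      (∑ i, ∑ j, e j i * (∑ γ, Q β γ * π i γ) * (x j - x i))
        + ∑ i, x i * ((∑ γ, Q β γ * π i γ) - π i β) = 0 := by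
  intro x _ β
  rw [sum_sum_mul_sub_eq_sum_mul_inflow_sub_outflow e (fun i => ∑ γ, Q β γ * π i γ) x,
    ← sum_add_distrib]
  refine sum_eq_zero fun i _ => ?_
  rw [hrec i β]
  ring
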